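/- Let $T$ be a stopping time (first hitting time) for a Markov chain on a finite state space, and suppose $M := \max_z E_z[T] < \infty$. Then for every starting state $y$, every integer $m \ge 1$: $E_y[T^m] \le m! \, E_y[T] \, M^{m-1}$. -/

import Mathlib

/-!
Write `E_z[τ^p] = ∑ₖ ((k+1)^p - k^p) P_z(τ > k)`. Since `(k+1)^(p+1) - k^(p+1) ≤ (p+1)(k+1)^p`
and `(k+1)^p = ∑_{j ≤ k} ((j+1)^p - j^p)`, regrouping the double sum along `k = n + j` and applying
the Markov property at time `n` to `P_z(τ > n + j)` gives
`E_z[τ^(p+1)] ≤ (p+1) ∑ₙ E_z[1_{τ > n} E_{X_n}[τ^p]] ≤ (p+1) (sup_x E_x[τ^p]) E_z[τ]`,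
and the bound follows by induction on the moment.
-/

open MeasureTheory Finset
open scoped ENNReal

lemma Nat.pow_succ_sub_pow_le (k p : ℕ) :
    (k + 1) ^ (p + 1) - k ^ (p + 1) ≤ (p + 1) * (k + 1) ^ p := by
  have h := abs_pow_sub_pow_le ((k : ℤ) + 1) k (p + 1)
  have hk : |(k : ℤ) + 1| = k + 1 := abs_of_nonneg (by positivity)
  rw [add_sub_cancel_left, abs_one, one_mul, add_tsub_cancel_right, hk, Nat.abs_cast,
    max_eq_left (by omega), abs_of_nonneg (sub_nonneg.mpr (by gcongr; omega))] at h
  zify [Nat.pow_le_pow_left k.le_succ (p + 1)]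
  exact_mod_cast h

lemma Nat.sum_range_pow_succ_sub_pow {p : ℕ} (hp : p ≠ 0) (n : ℕ) :
    ∑ k ∈ range n, ((k + 1) ^ p - k ^ p) = n ^ p := by
  rw [Finset.sum_range_tsub (f := (· ^ p)) fun _ _ h => Nat.pow_le_pow_left h p, zero_pow hp,
    Nat.sub_zero]

lemma ENNReal.tsum_sum_range_succ_mul (c N : ℕ → ℝ≥0∞) :
    ∑' k, (∑ j ∈ range (k + 1), c j) * N k = ∑' n, ∑' j, c j * N (n + j) := by
  have h (k : ℕ) : (∑ j ∈ range (k + 1), c j) * N k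
      = ∑' ji : antidiagonal k, c ji.1.1 * N (ji.1.2 + ji.1.1) := by
    rw [Finset.tsum_subtype (antidiagonal k) fun ji => c ji.1 * N (ji.2 + ji.1),
      Nat.sum_antidiagonal_eq_sum_range_succ (fun j i => c j * N (i + j)), Finset.sum_mul]
    refine Finset.sum_congr rfl fun j hj => ?_
    rw [Nat.sub_add_cancel (Nat.lt_succ_iff.mp (mem_range.mp hj))]
  simp_rw [h]
  rw [← ENNReal.tsum_sigma (fun k (ji : antidiagonal k) => c ji.1.1 * N (ji.1.2 + ji.1.1)),
    ← Finset.HasAntidiagonal.sigmaAntidiagonalEquivProd.symm.tsum_eq, ENNReal.tsum_prod',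
    ENNReal.tsum_comm]
  rfl

lemma ENat.toENNReal_pow_eq_tsum {p : ℕ} (hp : p ≠ 0) (x : ℕ∞) :
    (x : ℝ≥0∞) ^ p = ∑' k : ℕ, if (k : ℕ∞) < x then (((k + 1) ^ p - k ^ p : ℕ) : ℝ≥0∞) else 0 := by
  induction x using ENat.recTopCoe with
  | top =>
    rw [ENat.toENNReal_top, ENNReal.top_pow hp, eq_comm, eq_top_iff,
      ← ENNReal.tsum_const_eq_top_of_ne_zero (α := ℕ) one_ne_zero]
    refine ENNReal.tsum_le_tsum fun k => ?_
    rw [if_pos (ENat.natCast_lt_top k), Nat.one_le_cast]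
    exact Nat.sub_pos_of_lt (Nat.pow_lt_pow_left k.lt_succ_self hp)
  | coe n =>
    rw [tsum_eq_sum (s := range n) fun k hk => if_neg (by simpa using hk),
      Finset.sum_congr rfl fun k hk => if_pos (by simpa using hk), ← Nat.cast_sum,
      Nat.sum_range_pow_succ_sub_pow hp, Nat.cast_pow, ENat.toENNReal_coe]

section TailSums

variable {Ω : Type*} [MeasurableSpace Ω]

lemma lintegral_toENNReal_pow_eq_tsum {μ : Measure Ω} {τ : Ω → ℕ∞}
    (hτ : ∀ k : ℕ, MeasurableSet {ω | (k : ℕ∞) < τ ω}) {p : ℕ} (hp : p ≠ 0) :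
    ∫⁻ ω, (τ ω : ℝ≥0∞) ^ p ∂μ
      = ∑' k : ℕ, (((k + 1) ^ p - k ^ p : ℕ) : ℝ≥0∞) * μ {ω | (k : ℕ∞) < τ ω} := by
  have hind (ω : Ω) : (τ ω : ℝ≥0∞) ^ p = ∑' k : ℕ,
      {ω | (k : ℕ∞) < τ ω}.indicator (fun _ => (((k + 1) ^ p - k ^ p : ℕ) : ℝ≥0∞)) ω := by
    simp only [ENat.toENNReal_pow_eq_tsum hp, Set.indicator_apply, Set.mem_ofPred_eq]
  simp_rw [hind]
  rw [lintegral_tsum fun k => (measurable_const.indicator (hτ k)).aemeasurable]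
  simp_rw [lintegral_indicator_const (hτ _)]

lemma lintegral_toENNReal_eq_tsum {μ : Measure Ω} {τ : Ω → ℕ∞}
    (hτ : ∀ k : ℕ, MeasurableSet {ω | (k : ℕ∞) < τ ω}) :
    ∫⁻ ω, (τ ω : ℝ≥0∞) ∂μ = ∑' k : ℕ, μ {ω | (k : ℕ∞) < τ ω} := by
  simpa using lintegral_toENNReal_pow_eq_tsum (μ := μ) hτ one_ne_zero

end TailSums

section Markov

variable {Ω S : Type*} [MeasurableSpace Ω] [MeasurableSpace S]

def MarkovSurvival (P : S → Measure Ω) (X : ℕ → Ω → S) (τ : Ω → ℕ∞) : Prop :=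
  ∀ z n j, P z {ω | ((n + j : ℕ) : ℕ∞) < τ ω}
    = ∫⁻ ω in {ω | (n : ℕ∞) < τ ω}, P (X n ω) {ω | (j : ℕ∞) < τ ω} ∂P z

variable [Countable S] [MeasurableSingletonClass S] {P : S → Measure Ω} {X : ℕ → Ω → S}
  {τ : Ω → ℕ∞}

lemma tsum_mul_survival_add_eq (hX : ∀ n, Measurable (X n))
    (hτ : ∀ k : ℕ, MeasurableSet {ω | (k : ℕ∞) < τ ω}) (hP : MarkovSurvival P X τ)
    {p : ℕ} (hp : p ≠ 0) (z : S) (n : ℕ) :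
    ∑' j : ℕ, (((j + 1) ^ p - j ^ p : ℕ) : ℝ≥0∞) * P z {ω | ((n + j : ℕ) : ℕ∞) < τ ω}
      = ∫⁻ ω in {ω | (n : ℕ∞) < τ ω}, ∫⁻ ω', (τ ω' : ℝ≥0∞) ^ p ∂P (X n ω) ∂P z := by
  have hmeas (j : ℕ) : Measurable fun ω => P (X n ω) {ω | (j : ℕ∞) < τ ω} :=
    (measurable_of_countable fun x => P x {ω | (j : ℕ∞) < τ ω}).comp (hX n)
  simp_rw [lintegral_toENNReal_pow_eq_tsum hτ hp, hP z n, ← lintegral_const_mul _ (hmeas _)]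
  exact (lintegral_tsum fun j => ((hmeas j).const_mul _).aemeasurable).symm

lemma lintegral_pow_succ_le (hX : ∀ n, Measurable (X n))
    (hτ : ∀ k : ℕ, MeasurableSet {ω | (k : ℕ∞) < τ ω}) (hP : MarkovSurvival P X τ)
    {p : ℕ} (hp : p ≠ 0) {K : ℝ≥0∞} (hK : ∀ x, ∫⁻ ω, (τ ω : ℝ≥0∞) ^ p ∂P x ≤ K) (z : S) :
    ∫⁻ ω, (τ ω : ℝ≥0∞) ^ (p + 1) ∂P z ≤ (p + 1) * K * ∫⁻ ω, (τ ω : ℝ≥0∞) ∂P z := by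
  set c : ℕ → ℝ≥0∞ := fun j => (((j + 1) ^ p - j ^ p : ℕ) : ℝ≥0∞)
  set N : ℕ → ℝ≥0∞ := fun k => P z {ω | (k : ℕ∞) < τ ω}
  have hcN (k : ℕ) : (((k + 1) ^ (p + 1) - k ^ (p + 1) : ℕ) : ℝ≥0∞) * N k
      ≤ (p + 1) * ((∑ j ∈ range (k + 1), c j) * N k) := by
    rw [← mul_assoc, ← Nat.cast_sum, Nat.sum_range_pow_succ_sub_pow hp]
    gcongr
    exact_mod_cast Nat.pow_succ_sub_pow_le k p
  calc ∫⁻ ω, (τ ω : ℝ≥0∞) ^ (p + 1) ∂P z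
      ≤ (p + 1) * ∑' k, (∑ j ∈ range (k + 1), c j) * N k := by
        rw [lintegral_toENNReal_pow_eq_tsum hτ p.succ_ne_zero, ← ENNReal.tsum_mul_left]
        exact ENNReal.tsum_le_tsum hcN
    _ = (p + 1) * ∑' n : ℕ,
          ∫⁻ ω in {ω | (n : ℕ∞) < τ ω}, ∫⁻ ω', (τ ω' : ℝ≥0∞) ^ p ∂P (X n ω) ∂P z := by
        rw [ENNReal.tsum_sum_range_succ_mul]
        exact congrArg _ (tsum_congr (tsum_mul_survival_add_eq hX hτ hP hp z))
    _ ≤ (p + 1) * ∑' n, K * N n := by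
        gcongr with n
        exact (setLIntegral_mono' (hτ n) fun ω _ => hK (X n ω)).trans_eq (setLIntegral_const _ _)
    _ = (p + 1) * K * ∫⁻ ω, (τ ω : ℝ≥0∞) ∂P z := by
        rw [ENNReal.tsum_mul_left, lintegral_toENNReal_eq_tsum hτ, mul_assoc]

lemma lintegral_pow_le_factorial_mul (hX : ∀ n, Measurable (X n))
    (hτ : ∀ k : ℕ, MeasurableSet {ω | (k : ℕ∞) < τ ω}) (hP : MarkovSurvival P X τ)
    {m : ℕ} (hm : 1 ≤ m) (z : S) :
    ∫⁻ ω, (τ ω : ℝ≥0∞) ^ m ∂P z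
      ≤ m.factorial * (∫⁻ ω, (τ ω : ℝ≥0∞) ∂P z) * (⨆ x, ∫⁻ ω, (τ ω : ℝ≥0∞) ∂P x) ^ (m - 1) := by
  set M := ⨆ x, ∫⁻ ω, (τ ω : ℝ≥0∞) ∂P x
  induction m, hm using Nat.le_induction generalizing z with
  | base => simp
  | succ p hp ih =>
    have hK (x : S) : ∫⁻ ω, (τ ω : ℝ≥0∞) ^ p ∂P x ≤ p.factorial * M ^ p := calc
      _ ≤ p.factorial * (∫⁻ ω, (τ ω : ℝ≥0∞) ∂P x) * M ^ (p - 1) := ih x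
      _ ≤ p.factorial * M * M ^ (p - 1) := by
        gcongr
        exact le_iSup (fun x => ∫⁻ ω, (τ ω : ℝ≥0∞) ∂P x) x
      _ = p.factorial * M ^ p := by rw [mul_assoc, ← pow_succ', Nat.sub_add_cancel hp]
    calc _ ≤ (p + 1) * (p.factorial * M ^ p) * ∫⁻ ω, (τ ω : ℝ≥0∞) ∂P z :=
          lintegral_pow_succ_le hX hτ hP (by omega) hK z
      _ = _ := by rw [Nat.factorial_succ, Nat.add_sub_cancel]; push_cast; ring

end Markov

section PathSpace

variable {S : Type*}

noncomputable def firstHittingTime (A₀ : Set S) (ω : ℕ → S) : ℕ∞ :=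
  ⨅ i : {i : ℕ // ω i ∈ A₀}, (i : ℕ∞)

lemma toENNReal_firstHittingTime (A₀ : Set S) (ω : ℕ → S) :
    (firstHittingTime A₀ ω : ℝ≥0∞) = ⨅ i : {i : ℕ // ω i ∈ A₀}, ((i : ℕ) : ℝ≥0∞) := by
  simp [firstHittingTime]

lemma natCast_lt_firstHittingTime_iff {A₀ : Set S} {ω : ℕ → S} {k : ℕ} :
    (k : ℕ∞) < firstHittingTime A₀ ω ↔ ∀ i ≤ k, ω i ∉ A₀ := by
  rw [firstHittingTime, ← ENat.add_one_le_iff (ENat.natCast_ne_top k), le_iInf_iff]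
  refine ⟨fun h i hi hiA => ?_, fun h i => ?_⟩
  · have : k + 1 ≤ i := by exact_mod_cast h ⟨i, hiA⟩
    omega
  · have : k < i := lt_of_not_ge fun hik => h i hik i.2
    exact_mod_cast this

variable [MeasurableSpace S]

def IsMarkovFamily (P : S → Measure (ℕ → S)) : Prop :=
  ∀ z (n : ℕ) (A B : Set (ℕ → S)), MeasurableSet A → MeasurableSet B →
    (∀ ω ω' : ℕ → S, (∀ i ≤ n, ω i = ω' i) → (ω ∈ A ↔ ω' ∈ A)) →
    P z (A ∩ {ω | (fun i => ω (i + n)) ∈ B}) = ∫⁻ ω in A, P (ω n) B ∂(P z)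

lemma measurableSet_natCast_lt_firstHittingTime {A₀ : Set S} (hA : MeasurableSet A₀) (k : ℕ) :
    MeasurableSet {ω : ℕ → S | (k : ℕ∞) < firstHittingTime A₀ ω} := by
  simp_rw [natCast_lt_firstHittingTime_iff, Set.ofPred_forall]
  exact .iInter fun i => .iInter fun _ => (measurable_pi_apply i hA).compl

lemma IsMarkovFamily.markovSurvival_firstHittingTime {P : S → Measure (ℕ → S)}
    (hP : IsMarkovFamily P) {A₀ : Set S} (hA : MeasurableSet A₀) :
    MarkovSurvival P (fun n ω => ω n) (firstHittingTime A₀) := by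
  intro z n j
  have hsplit : {ω : ℕ → S | ((n + j : ℕ) : ℕ∞) < firstHittingTime A₀ ω}
      = {ω | (n : ℕ∞) < firstHittingTime A₀ ω}
        ∩ {ω | (fun i => ω (i + n)) ∈ {ω | (j : ℕ∞) < firstHittingTime A₀ ω}} := by
    ext ω
    simp only [Set.mem_inter_iff, Set.mem_ofPred_eq, natCast_lt_firstHittingTime_iff]
    refine ⟨fun h => ⟨fun i hi => h i (by omega), fun i hi => h (i + n) (by omega)⟩,
      fun ⟨h₁, h₂⟩ i hi => ?_⟩
    rcases le_or_gt i n with hin | hin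
    · exact h₁ i hin
    · simpa [Nat.sub_add_cancel hin.le] using h₂ (i - n) (by omega)
  rw [hsplit]
  refine hP z n _ _ (measurableSet_natCast_lt_firstHittingTime hA n)
    (measurableSet_natCast_lt_firstHittingTime hA j) fun ω ω' hωω' => ?_
  simp only [Set.mem_ofPred_eq, natCast_lt_firstHittingTime_iff]
  exact forall₂_congr fun i hi => by rw [hωω' i hi]

end PathSpace

theorem kac_moment_formula_general
    {S : Type*} [Fintype S] [MeasurableSpace S] [MeasurableSingletonClass S]
    (P : S → Measure (ℕ → S))
    (hMarkov : ∀ z (n : ℕ) (A B : Set (ℕ → S)), MeasurableSet A → MeasurableSet B →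
      (∀ ω ω' : ℕ → S, (∀ i ≤ n, ω i = ω' i) → (ω ∈ A ↔ ω' ∈ A)) →
      P z (A ∩ {ω | (fun i => ω (i + n)) ∈ B}) = ∫⁻ ω in A, P (ω n) B ∂(P z))
    (A₀ : Set S)
    (T : (ℕ → S) → ℝ≥0∞)
    (hT : ∀ ω, T ω = ⨅ i : {i : ℕ // ω i ∈ A₀}, ((i : ℕ) : ℝ≥0∞))
    (M : ℝ≥0∞) (hM : M = ⨆ z, ∫⁻ ω, T ω ∂(P z))
    (y : S) (m : ℕ) (hm : 1 ≤ m) :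
    ∫⁻ ω, (T ω) ^ m ∂(P y) ≤ (Nat.factorial m : ℝ≥0∞) * (∫⁻ ω, T ω ∂(P y)) * M ^ (m - 1) := by
  have hA : MeasurableSet A₀ := A₀.toFinite.measurableSet
  obtain rfl : T = fun ω => (firstHittingTime A₀ ω : ℝ≥0∞) :=
    funext fun ω => by rw [hT, toENNReal_firstHittingTime]
  subst hM
  exact lintegral_pow_le_factorial_mul measurable_pi_apply
    (measurableSet_natCast_lt_firstHittingTime hA)
    (IsMarkovFamily.markovSurvival_firstHittingTime hMarkov hA) hm y

/-- Kac's moment formula: for the first hitting time `T` of a set by a Markov chain on a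
finite state space, `E_y[T^m] ≤ m! E_y[T] M^(m-1)` where `M = max_z E_z[T]`. -/
theorem kac_moment_formula
    {S : Type*} [Fintype S] [MeasurableSpace S] [MeasurableSingletonClass S]
    (P : S → Measure (ℕ → S))
    (hprob : ∀ z, IsProbabilityMeasure (P z))
    (hstart : ∀ z, P z {ω | ω 0 = z} = 1)
    (hMarkov : ∀ z (n : ℕ) (A B : Set (ℕ → S)), MeasurableSet A → MeasurableSet B →
      (∀ ω ω' : ℕ → S, (∀ i ≤ n, ω i = ω' i) → (ω ∈ A ↔ ω' ∈ A)) →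
      P z (A ∩ {ω | (fun i => ω (i + n)) ∈ B}) = ∫⁻ ω in A, P (ω n) B ∂(P z))
    (A₀ : Set S)
    (T : (ℕ → S) → ℝ≥0∞)
    (hT : ∀ ω, T ω = ⨅ i : {i : ℕ // ω i ∈ A₀}, ((i : ℕ) : ℝ≥0∞))
    (M : ℝ≥0∞) (hM : M = ⨆ z, ∫⁻ ω, T ω ∂(P z)) (hMfin : M ≠ ⊤)
    (y : S) (m : ℕ) (hm : 1 ≤ m) :
    ∫⁻ ω, (T ω) ^ m ∂(P y) ≤ (Nat.factorial m : ℝ≥0∞) * (∫⁻ ω, T ω ∂(P y)) * M ^ (m - 1) :=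
  kac_moment_formula_general P hMarkov A₀ T hT M hM y m hm
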